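/- Let T : G(9₄₈) → G(9₄₈) be any group homomorphism satisfying T(x₁) = x₃, T(x₂) = x₆⁻¹x₃x₆, T(x₃) = x₉, T(x₄) = x₆, T(x₅) = x₁x₆x₁⁻¹, T(x₆) = x₁, T(x₇) = x₁x₄x₁⁻¹, T(x₈) = x₄, T(x₉) = x₁x₈x₁⁻¹. Then the third power T³ = T ∘ T ∘ T satisfies: T³(x₁) = x₁x₈x₁⁻¹, T³(x₂) = x₁x₄x₁⁻¹, T³(x₃) = x₃x₄x₃⁻¹, T³(x₄) = x₃, T³(x₅) = x₉x₃x₉⁻¹, T³(x₆) = x₉, T³(x₇) = x₁x₆x₁⁻¹, T³(x₈) = x₁, T³(x₉) = x₉x₆x₉⁻¹. -/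

import Mathlib

/-- Relators of the Wirtinger presentation of the group of the knot `9₄₈`.
Generator `i : Fin 9` stands for `xᵢ₊₁`; the relation `a b a⁻¹ = c` is encoded
as the relator `a * b * a⁻¹ * c⁻¹`. -/
def rels948 : Set (FreeGroup (Fin 9)) :=
  let x : Fin 9 → FreeGroup (Fin 9) := FreeGroup.of
  { x 0 * x 1 * (x 0)⁻¹ * (x 2)⁻¹,
    x 3 * x 1 * (x 3)⁻¹ * (x 0)⁻¹,
    x 1 * x 3 * (x 1)⁻¹ * (x 7)⁻¹,
    x 5 * x 7 * (x 5)⁻¹ * (x 6)⁻¹,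
    x 6 * x 0 * (x 6)⁻¹ * (x 5)⁻¹,
    x 0 * x 6 * (x 0)⁻¹ * (x 8)⁻¹,
    x 4 * x 8 * (x 4)⁻¹ * (x 2)⁻¹,
    x 2 * x 5 * (x 2)⁻¹ * (x 4)⁻¹,
    x 5 * x 3 * (x 5)⁻¹ * (x 4)⁻¹ }

/-- The group `G(9₄₈)` of the knot `9₄₈`, given by its Wirtinger presentation. -/
def G948 : Type := PresentedGroup rels948

instance : Group G948 := by unfold G948; infer_instance

/-- The image `xᵢ₊₁` of the `i`-th generator in `G(9₄₈)`. -/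
def x948 (i : Fin 9) : G948 := PresentedGroup.of i

/-!
Substituting the action of `T` three times, seven of the nine claimed images agree with the
prescribed words already in the free group. The two remaining ones, for `x₂` and `x₇`, reduce to
the prescribed words after expanding `x₃ = x₁x₂x₁⁻¹, x₈ = x₂x₄x₂⁻¹` and
`x₉ = x₁x₇x₁⁻¹, x₆ = x₇x₁x₇⁻¹` respectively.
-/

theorem PresentedGroup.of_conj_eq_of_mem {α : Type*} {rels : Set (FreeGroup α)} {i j k : α}
    (h : FreeGroup.of i * FreeGroup.of j * (FreeGroup.of i)⁻¹ * (FreeGroup.of k)⁻¹ ∈ rels) :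
    (of i * of j * (of i)⁻¹ : PresentedGroup rels) = of k := by
  have hmk := mk_eq_mk_of_mul_inv_mem h
  simp only [map_mul, map_inv] at hmk
  exact hmk

namespace G948

theorem x0_conj_x1 : x948 0 * x948 1 * (x948 0)⁻¹ = x948 2 :=
  PresentedGroup.of_conj_eq_of_mem (by simp [rels948])

theorem x1_conj_x3 : x948 1 * x948 3 * (x948 1)⁻¹ = x948 7 :=
  PresentedGroup.of_conj_eq_of_mem (by simp [rels948])

theorem x6_conj_x0 : x948 6 * x948 0 * (x948 6)⁻¹ = x948 5 :=
  PresentedGroup.of_conj_eq_of_mem (by simp [rels948])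

theorem x0_conj_x6 : x948 0 * x948 6 * (x948 0)⁻¹ = x948 8 :=
  PresentedGroup.of_conj_eq_of_mem (by simp [rels948])

theorem x2_inv_conj_x0_conj_x7 :
    (x948 2)⁻¹ * (x948 0 * x948 7 * (x948 0)⁻¹) * x948 2 = x948 0 * x948 3 * (x948 0)⁻¹ := by
  rw [← x0_conj_x1, ← x1_conj_x3]; group

theorem x8_conj_x0 : x948 8 * x948 0 * (x948 8)⁻¹ = x948 0 * x948 5 * (x948 0)⁻¹ := by
  rw [← x0_conj_x6, ← x6_conj_x0]; group

end G948

/-- Any endomorphism `T` of `G(9₄₈)` with the prescribed action on the generators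
has third power `T³` acting by `T³(x₁) = x₁x₈x₁⁻¹`, `T³(x₂) = x₁x₄x₁⁻¹`,
`T³(x₃) = x₃x₄x₃⁻¹`, `T³(x₄) = x₃`, `T³(x₅) = x₉x₃x₉⁻¹`, `T³(x₆) = x₉`,
`T³(x₇) = x₁x₆x₁⁻¹`, `T³(x₈) = x₁`, `T³(x₉) = x₉x₆x₉⁻¹`. -/
theorem T_cubed_action (T : G948 →* G948)
    (h1 : T (x948 0) = x948 2)
    (h2 : T (x948 1) = (x948 5)⁻¹ * x948 2 * x948 5)
    (h3 : T (x948 2) = x948 8)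
    (h4 : T (x948 3) = x948 5)
    (h5 : T (x948 4) = x948 0 * x948 5 * (x948 0)⁻¹)
    (h6 : T (x948 5) = x948 0)
    (h7 : T (x948 6) = x948 0 * x948 3 * (x948 0)⁻¹)
    (h8 : T (x948 7) = x948 3)
    (h9 : T (x948 8) = x948 0 * x948 7 * (x948 0)⁻¹) :
    T (T (T (x948 0))) = x948 0 * x948 7 * (x948 0)⁻¹ ∧
    T (T (T (x948 1))) = x948 0 * x948 3 * (x948 0)⁻¹ ∧
    T (T (T (x948 2))) = x948 2 * x948 3 * (x948 2)⁻¹ ∧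
    T (T (T (x948 3))) = x948 2 ∧
    T (T (T (x948 4))) = x948 8 * x948 2 * (x948 8)⁻¹ ∧
    T (T (T (x948 5))) = x948 8 ∧
    T (T (T (x948 6))) = x948 0 * x948 5 * (x948 0)⁻¹ ∧
    T (T (T (x948 7))) = x948 0 ∧
    T (T (T (x948 8))) = x948 8 * x948 5 * (x948 8)⁻¹ := by
  refine ⟨?_, ?_, ?_, ?_, ?_, ?_, ?_, ?_, ?_⟩ <;>
    simp only [map_mul, map_inv, h1, h2, h3, h4, h5, h6, h7, h8, h9]
  · exact G948.x2_inv_conj_x0_conj_x7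
  · exact G948.x8_conj_x0
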